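/- If (X_n) is a sequence of nonzero real Banach spaces, then T(c0(X_n)) = inf_n T(X_n). -/
import Mathlib

/-- The thickness index `T(X)` of a normed space. -/
noncomputable def thickness (X : Type*) [NormedAddCommGroup X] : ℝ :=
  sInf {r : ℝ | 0 < r ∧ ∃ (n : ℕ) (x : Fin n → X), (∀ i, ‖x i‖ = 1) ∧
    Metric.closedBall (0 : X) 1 ⊆ ⋃ i, Metric.closedBall (x i) r}

/-- The `c₀`-sum of a sequence of normed spaces, realized as the closed subspace of the
`ℓ∞`-sum (`lp X ⊤`, with the supremum norm) consisting of those elements whose coordinate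
norms tend to `0`. -/
noncomputable def c0Sum (X : ℕ → Type*) [∀ n, NormedAddCommGroup (X n)]
    [∀ n, NormedSpace ℝ (X n)] : Submodule ℝ (lp X ⊤) where
  carrier := {x | Filter.Tendsto (fun n => ‖x n‖) Filter.atTop (nhds 0)}
  zero_mem' := by
    simp only [Set.mem_setOf_eq, lp.coeFn_zero, Pi.zero_apply, norm_zero]
    exact tendsto_const_nhds
  add_mem' := by
    intro a b ha hb
    have h := ha.add hb
    rw [add_zero] at h
    refine squeeze_zero (fun n => norm_nonneg _) (fun n => ?_) h
    exact norm_add_le _ _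
  smul_mem' := by
    intro c x hx
    have h : Filter.Tendsto (fun n => ‖c‖ * ‖x n‖) Filter.atTop (nhds (‖c‖ * 0)) :=
      hx.const_mul ‖c‖
    rw [mul_zero] at h
    refine h.congr (fun n => ?_)
    simp [norm_smul]

open Metric Filter Set

section Aux

/-- The set of admissible radii for the thickness index. -/
def thickSet (Y : Type*) [NormedAddCommGroup Y] : Set ℝ :=
  {r : ℝ | 0 < r ∧ ∃ (n : ℕ) (x : Fin n → Y), (∀ i, ‖x i‖ = 1) ∧
    Metric.closedBall (0 : Y) 1 ⊆ ⋃ i, Metric.closedBall (x i) r}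

variable {Y : Type*} [NormedAddCommGroup Y]

lemma thickness_eq_sInf_thickSet : thickness Y = sInf (thickSet Y) := rfl

lemma two_mem_thickSet (u : Y) (hu : ‖u‖ = 1) : (2:ℝ) ∈ thickSet Y := by
  refine ⟨two_pos, 1, fun _ => u, fun _ => hu, fun y hy => ?_⟩
  rw [mem_closedBall_zero_iff] at hy
  refine mem_iUnion.2 ⟨0, ?_⟩
  rw [mem_closedBall, dist_eq_norm]
  calc ‖y - u‖ ≤ ‖y‖ + ‖u‖ := norm_sub_le _ _
  _ ≤ 2 := by rw [hu]; linarith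

lemma one_le_of_mem_thickSet {r : ℝ} (hr : r ∈ thickSet Y) : 1 ≤ r := by
  obtain ⟨-, n, x, hx, hcov⟩ := hr
  have h0 : (0:Y) ∈ Metric.closedBall (0:Y) 1 := mem_closedBall_self zero_le_one
  obtain ⟨i, hi⟩ := mem_iUnion.1 (hcov h0)
  rw [mem_closedBall, dist_eq_norm, zero_sub, norm_neg, hx i] at hi
  exact hi

lemma thickSet_bddBelow : BddBelow (thickSet Y) := ⟨0, fun r hr => hr.1.le⟩

lemma attain_norm {E : ℕ → Type*} [∀ n, NormedAddCommGroup (E n)] (v : lp E ⊤)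
    (hv : Tendsto (fun n => ‖v n‖) atTop (nhds 0)) (hnorm : ‖v‖ = 1) : ∃ n, ‖v n‖ = 1 := by
  have hev : ∀ᶠ n in atTop, ‖v n‖ < 1/2 := hv.eventually_lt_const (by norm_num)
  obtain ⟨N, hN⟩ := eventually_atTop.1 hev
  obtain ⟨n₀, -, hn₀⟩ := Finset.exists_max_image (Finset.range (N+1)) (fun n => ‖v n‖)
    ⟨N, Finset.mem_range.2 (Nat.lt_succ_self N)⟩
  have hmax : ∀ n, ‖v n‖ ≤ max ‖v n₀‖ (1/2) := by
    intro n
    rcases lt_or_ge n (N+1) with h | h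
    · exact le_max_of_le_left (hn₀ n (Finset.mem_range.2 h))
    · exact le_max_of_le_right (hN n (by omega)).le
  have h1 : (1:ℝ) ≤ max ‖v n₀‖ (1/2) := by
    have := lp.norm_le_of_forall_le (le_max_of_le_right (by norm_num : (0:ℝ) ≤ 1/2)) hmax
    rwa [hnorm] at this
  have h2 : ‖v n₀‖ ≤ 1 := hnorm ▸ lp.norm_apply_le_norm ENNReal.top_ne_zero v n₀
  refine ⟨n₀, le_antisymm h2 ?_⟩
  rcases max_cases ‖v n₀‖ (1/2) with ⟨he, -⟩ | ⟨he, -⟩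
  · rwa [he] at h1
  · rw [he] at h1; norm_num at h1

lemma lp_norm_single_top {E : ℕ → Type*} [∀ n, NormedAddCommGroup (E n)] (m : ℕ) (a : E m) :
    ‖lp.single ⊤ m a‖ = ‖a‖ := by
  apply le_antisymm
  · apply lp.norm_le_of_forall_le (norm_nonneg a)
    intro j
    rcases eq_or_ne j m with h | h
    · subst h; rw [lp.single_apply_self]
    · rw [lp.single_apply_ne _ _ _ h, norm_zero]; exact norm_nonneg a
  · have := lp.norm_apply_le_norm ENNReal.top_ne_zero (lp.single ⊤ m a) m
    rwa [lp.single_apply_self] at this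

end Aux

lemma single_mem_c0Sum (X : ℕ → Type*) [∀ n, NormedAddCommGroup (X n)]
    [∀ n, NormedSpace ℝ (X n)] (m : ℕ) (a : X m) :
    (lp.single ⊤ m a : lp X ⊤) ∈ c0Sum X := by
  have : ∀ᶠ n in atTop, (0:ℝ) = ‖(lp.single ⊤ m a : lp X ⊤) n‖ := by
    filter_upwards [eventually_gt_atTop m] with n hn
    rw [lp.single_apply_ne _ _ _ (by omega : n ≠ m), norm_zero]
  exact tendsto_const_nhds.congr' this



theorem thickness_c0Sum (X : ℕ → Type*) [∀ n, NormedAddCommGroup (X n)]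
    [∀ n, NormedSpace ℝ (X n)] [∀ n, CompleteSpace (X n)] [∀ n, Nontrivial (X n)] :
    thickness (c0Sum X) = ⨅ n, thickness (X n) := by
  classical
  have hbdd : BddBelow (Set.range fun n => thickness (X n)) :=
    ⟨0, by rintro t ⟨n, rfl⟩; exact Real.sInf_nonneg (fun s hs => hs.1.le)⟩
  apply le_antisymm
  · -- upper bound: thickness (c0Sum X) ≤ thickness (X m) for every m
    refine le_ciInf fun m => ?_
    obtain ⟨v, hv⟩ := exists_ne (0 : X m)
    have hu : ‖‖v‖⁻¹ • v‖ = 1 := norm_smul_inv_norm hv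
    rw [thickness_eq_sInf_thickSet, thickness_eq_sInf_thickSet]
    refine csInf_le_csInf thickSet_bddBelow ⟨2, two_mem_thickSet _ hu⟩ ?_
    rintro r hr
    obtain ⟨hr0, k, x, hx, hcov⟩ := hr
    have h1r : (1:ℝ) ≤ r := one_le_of_mem_thickSet ⟨hr0, k, x, hx, hcov⟩
    refine ⟨hr0, k, fun i => ⟨lp.single ⊤ m (x i), single_mem_c0Sum X m (x i)⟩, ?_, ?_⟩
    · intro i
      show ‖(lp.single ⊤ m (x i) : lp X ⊤)‖ = 1
      rw [lp_norm_single_top, hx i]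
    · intro yy hyy
      rw [mem_closedBall_zero_iff] at hyy
      have hyy' : ‖(yy : lp X ⊤)‖ ≤ 1 := hyy
      have hym : (yy : lp X ⊤) m ∈ Metric.closedBall (0 : X m) 1 :=
        mem_closedBall_zero_iff.2
          (le_trans (lp.norm_apply_le_norm ENNReal.top_ne_zero _ m) hyy')
      obtain ⟨i, hi⟩ := mem_iUnion.1 (hcov hym)
      rw [mem_closedBall, dist_eq_norm] at hi
      refine mem_iUnion.2 ⟨i, ?_⟩
      rw [mem_closedBall, dist_eq_norm]
      show ‖((yy : lp X ⊤) - lp.single ⊤ m (x i))‖ ≤ r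
      apply lp.norm_le_of_forall_le (le_trans zero_le_one h1r)
      intro j
      rw [lp.coeFn_sub, Pi.sub_apply]
      rcases eq_or_ne j m with hj | hj
      · subst hj; rw [lp.single_apply_self]; exact hi
      · rw [lp.single_apply_ne _ _ _ hj, sub_zero]
        exact le_trans (le_trans (lp.norm_apply_le_norm ENNReal.top_ne_zero _ j) hyy') h1r
  · -- lower bound
    obtain ⟨v0, hv0⟩ := exists_ne (0 : X 0)
    have hu0 : ‖‖v0‖⁻¹ • v0‖ = 1 := norm_smul_inv_norm hv0
    have hune : (2:ℝ) ∈ thickSet ↥(c0Sum X) := by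
      refine two_mem_thickSet (⟨lp.single ⊤ 0 (‖v0‖⁻¹ • v0), single_mem_c0Sum X 0 _⟩ :
        ↥(c0Sum X)) ?_
      show ‖(lp.single ⊤ 0 (‖v0‖⁻¹ • v0) : lp X ⊤)‖ = 1
      rw [lp_norm_single_top, hu0]
    rw [thickness_eq_sInf_thickSet]
    refine le_csInf ⟨2, hune⟩ fun r hr => ?_
    obtain ⟨hr0, k, c, hcnorm, hcov⟩ := hr
    by_contra hcon
    push_neg at hcon
    have hnot : ∀ n, r ∉ thickSet (X n) := by
      intro n hmem
      have h1 : thickness (X n) ≤ r := csInf_le thickSet_bddBelow hmem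
      have h2 : r < thickness (X n) := lt_of_lt_of_le hcon (ciInf_le hbdd n)
      linarith
    -- each center attains its norm at some coordinate
    have hatt : ∀ i : Fin k, ∃ n, ‖(c i : lp X ⊤) n‖ = 1 := by
      intro i
      exact attain_norm (c i : lp X ⊤) (c i).2 (hcnorm i)
    choose h hh using hatt
    -- for each coordinate, escape point beating all centers attaining norm there
    have hesc : ∀ n : ℕ, ∃ y : X n, ‖y‖ ≤ 1 ∧
        ∀ i : Fin k, h i = n → r < ‖y - (c i : lp X ⊤) n‖ := by
      intro n
      by_contra hbad
      push_neg at hbad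
      apply hnot n
      refine ⟨hr0, Fintype.card {i : Fin k // h i = n},
        fun j => (c ((Fintype.equivFin {i : Fin k // h i = n}).symm j) : lp X ⊤) n, ?_, ?_⟩
      · intro j
        have hj := ((Fintype.equivFin {i : Fin k // h i = n}).symm j).2
        have := hh ((Fintype.equivFin {i : Fin k // h i = n}).symm j).1
        rw [hj] at this
        exact this
      · intro y hy
        rw [mem_closedBall_zero_iff] at hy
        obtain ⟨i, hin, hle⟩ := hbad y hy
        refine mem_iUnion.2 ⟨(Fintype.equivFin {i : Fin k // h i = n}) ⟨i, hin⟩, ?_⟩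
        rw [mem_closedBall, dist_eq_norm]
        simp only [Equiv.symm_apply_apply]
        exact hle
    choose y hy1 hy2 using hesc
    set S : Finset ℕ := Finset.image h Finset.univ with hS
    set f : ∀ n, X n := (fun n => if n ∈ S then y n else 0) with hfdef
    have hf1 : ∀ n, ‖f n‖ ≤ 1 := by
      intro n
      by_cases hn : n ∈ S
      · simpa [hfdef, hn] using hy1 n
      · simp [hfdef, hn]
    have hmem : Memℓp f ⊤ := memℓp_infty ⟨1, by rintro t ⟨n, rfl⟩; exact hf1 n⟩
    set xlp : lp X ⊤ := ⟨f, hmem⟩ with hxlp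
    have hcoe : ∀ n, xlp n = f n := fun n => rfl
    have htend : Filter.Tendsto (fun n => ‖xlp n‖) Filter.atTop (nhds 0) := by
      have hev : ∀ᶠ n in atTop, (0:ℝ) = ‖xlp n‖ := by
        filter_upwards [eventually_gt_atTop (S.sup id)] with n hn
        have hns : n ∉ S := by
          intro hmem'
          have := Finset.le_sup (f := id) hmem'
          simp only [id] at this
          omega
        show (0:ℝ) = ‖f n‖
        simp only [hfdef]
        rw [if_neg hns, norm_zero]
      exact tendsto_const_nhds.congr' hev
    have hxball : (⟨xlp, htend⟩ : ↥(c0Sum X)) ∈ Metric.closedBall (0 : ↥(c0Sum X)) 1 := by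
      rw [mem_closedBall_zero_iff]
      show ‖xlp‖ ≤ 1
      exact lp.norm_le_of_forall_le zero_le_one (fun n => by rw [hcoe]; exact hf1 n)
    obtain ⟨i, hi⟩ := mem_iUnion.1 (hcov hxball)
    rw [mem_closedBall, dist_eq_norm] at hi
    have hkey : ‖xlp - (c i : lp X ⊤)‖ ≤ r := hi
    have hco : ‖(xlp - (c i : lp X ⊤)) (h i)‖ ≤ r :=
      le_trans (lp.norm_apply_le_norm ENNReal.top_ne_zero _ _) hkey
    have happ : (xlp - (c i : lp X ⊤)) (h i) = f (h i) - (c i : lp X ⊤) (h i) := by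
      rw [lp.coeFn_sub, Pi.sub_apply, hcoe]
    have hSi : h i ∈ S := Finset.mem_image_of_mem h (Finset.mem_univ i)
    have hfi : f (h i) = y (h i) := by rw [hfdef]; simp [hSi]
    have hgt := hy2 (h i) i rfl
    rw [happ, hfi] at hco
    linarith
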